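/- For every m, n ∈ ℕ with m < 2^n and every x ∈ G, the Walsh–Dirichlet kernel admits the representation D_m(x) = ∑_{k=0}^{n-1} 𝟙_{I_k \ I_{k+1}}(x) ∑_{j=0}^{k} ε_{kj} 2^{j-1} w_m(x + e_j) − (1/2) w_m(x) + (m + 1/2) 𝟙_{I_n}(x), where ε_{kj} = −1 for 0 ≤ j ≤ k−1 and ε_{kk} = +1. -/

import Mathlib

open MeasureTheory Finset ENNReal

noncomputable section

/-- The Walsh (dyadic) group: countable product of `ZMod 2`. -/
abbrev G := ℕ → ZMod 2

instance : MeasurableSpace (ZMod 2) := ⊤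

/-- The dyadic interval `I_n` of rank `n` at `0`. -/
def In (n : ℕ) : Set G := {y : G | ∀ i < n, y i = 0}

/-- `e_j`: the element whose `j`-th coordinate is `1`, all others `0`. -/
def ej (j : ℕ) : G := fun i => if i = j then 1 else 0

/-- The Walsh–Paley function `w_n`. -/
def walsh (n : ℕ) (x : G) : ℝ :=
  (-1 : ℝ) ^ (∑ k ∈ Finset.range n, if n.testBit k then (x k).val else 0)

/-- The Walsh–Dirichlet kernel `D_n`. -/
def Dker (n : ℕ) (x : G) : ℝ := ∑ k ∈ Finset.range n, walsh k x

/-- `μ` is the (normalized) Haar measure of `G`. -/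
def IsHaar (μ : Measure G) : Prop :=
  IsProbabilityMeasure μ ∧ ∀ a : G, MeasurePreserving (fun y => a + y) μ μ

/-- `log⁺`. -/
def logp (u : ℝ) : ℝ := if 1 < u then Real.log u else 0

/-- The `L log⁺ L` integral of a two-variable function. -/
def LlogL (μ : Measure G) (f : G × G → ℝ) : ℝ≥0∞ :=
  ∫⁻ p, ENNReal.ofReal (|f p| * logp |f p|) ∂(μ.prod μ)

/-- Walsh–Fourier coefficient of a two-variable function. -/
def fhat (μ : Measure G) (f : G × G → ℝ) (i j : ℕ) : ℝ :=
  ∫ p, f p * walsh i p.1 * walsh j p.2 ∂(μ.prod μ)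

/-- Rectangular partial sum `S_{M,N} f`. -/
def SMN (μ : Measure G) (M N : ℕ) (f : G × G → ℝ) (x y : G) : ℝ :=
  ∑ i ∈ Finset.range M, ∑ j ∈ Finset.range N, fhat μ f i j * walsh i x * walsh j y

/-- One-dimensional `2^n`-th partial sum (conditional expectation form). -/
def S2 (μ : Measure G) (n : ℕ) (f : G → ℝ) (x : G) : ℝ :=
  2 ^ n * ∫ t in In n, f (x + t) ∂μ

/-- Schipp's operator `V_n`. -/
def Vop (μ : Measure G) (n : ℕ) (f : G → ℝ) (x : G) : ℝ :=
  ((1 / 2 ^ n) * ∫ t, (∑ j ∈ Finset.range n,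
      2 ^ j / 2 * Set.indicator (In j) (fun _ => (1 : ℝ)) t * S2 μ n f (x + t + ej j)) ^ 2 ∂μ)
    ^ (1/2 : ℝ)

/-- `S^{(1)}_{2^n}`: partial sum in the first variable. -/
def S1 (μ : Measure G) (n : ℕ) (f : G × G → ℝ) (x y : G) : ℝ :=
  2 ^ n * ∫ s in In n, f (x + s, y) ∂μ

/-- `S^{(2)}_{2^n}`: partial sum in the second variable. -/
def S2' (μ : Measure G) (n : ℕ) (f : G × G → ℝ) (x y : G) : ℝ :=
  2 ^ n * ∫ t in In n, f (x, y + t) ∂μ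

/-- `V_1` of the paper (with index `n`). -/
def V1 (μ : Measure G) (n : ℕ) (f : G × G → ℝ) (x y : G) : ℝ :=
  ((1 / 2 ^ n) * ∫ t, (∑ j ∈ Finset.range n,
      2 ^ j / 2 * Set.indicator (In j) (fun _ => (1 : ℝ)) t * S1 μ n f (x + t + ej j) y) ^ 2 ∂μ)
    ^ (1/2 : ℝ)

/-- `V_2` of the paper (with index `n`). -/
def V2 (μ : Measure G) (n : ℕ) (f : G × G → ℝ) (x y : G) : ℝ :=
  ((1 / 2 ^ n) * ∫ t, (∑ j ∈ Finset.range n,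
      2 ^ j / 2 * Set.indicator (In j) (fun _ => (1 : ℝ)) t * S2' μ n f x (y + t + ej j)) ^ 2 ∂μ)
    ^ (1/2 : ℝ)

/-- Hybrid maximal function in the first variable (`ℝ≥0∞`-valued). -/
def M1e (μ : Measure G) (f : G × G → ℝ) (p : G × G) : ℝ≥0∞ :=
  ⨆ n : ℕ, ENNReal.ofReal (2 ^ n * ∫ s in In n, |f (p.1 + s, p.2)| ∂μ)

/-- Hybrid maximal function in the second variable (`ℝ≥0∞`-valued). -/
def M2e (μ : Measure G) (f : G × G → ℝ) (p : G × G) : ℝ≥0∞ :=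
  ⨆ n : ℕ, ENNReal.ofReal (2 ^ n * ∫ t in In n, |f (p.1, p.2 + t)| ∂μ)

/-- Two-dimensional dyadic maximal function (`ℝ≥0∞`-valued). -/
def Me (μ : Measure G) (f : G × G → ℝ) (p : G × G) : ℝ≥0∞ :=
  ⨆ n : ℕ, ENNReal.ofReal (2 ^ (2*n) *
    |∫ q in (In n) ×ˢ (In n), f (p.1 + q.1, p.2 + q.2) ∂(μ.prod μ)|)

/-- The diagonal maximal function `A` of the paper (`ℝ≥0∞`-valued). -/
def Ae (μ : Measure G) (f : G × G → ℝ) (p : G × G) : ℝ≥0∞ :=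
  ⨆ j : ℕ, ENNReal.ofReal (2 ^ j * ∫ s in In j, |f (p.1 + s, p.2 + s)| ∂μ)

/-- `ℝ≥0∞`-valued partial sum in the first variable. -/
def S1e (μ : Measure G) (n : ℕ) (h : G × G → ℝ≥0∞) (x y : G) : ℝ≥0∞ :=
  2 ^ n * ∫⁻ s in In n, h (x + s, y) ∂μ

/-- `ℝ≥0∞`-valued partial sum in the second variable. -/
def S2e (μ : Measure G) (n : ℕ) (h : G × G → ℝ≥0∞) (x y : G) : ℝ≥0∞ :=
  2 ^ n * ∫⁻ t in In n, h (x, y + t) ∂μ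

/-- `ℝ≥0∞`-valued maximal operator `V_1`. -/
def V1e (μ : Measure G) (h : G × G → ℝ≥0∞) (x y : G) : ℝ≥0∞ :=
  ⨆ n : ℕ, ((1 / 2 ^ n) * ∫⁻ t, (∑ j ∈ Finset.range n,
      2 ^ j / 2 * Set.indicator (In j) (fun _ => (1 : ℝ≥0∞)) t * S1e μ n h (x + t + ej j) y) ^ 2 ∂μ)
    ^ (1/2 : ℝ)

/-- `ℝ≥0∞`-valued maximal operator `V_2`. -/
def V2e (μ : Measure G) (h : G × G → ℝ≥0∞) (x y : G) : ℝ≥0∞ :=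
  ⨆ n : ℕ, ((1 / 2 ^ n) * ∫⁻ t, (∑ j ∈ Finset.range n,
      2 ^ j / 2 * Set.indicator (In j) (fun _ => (1 : ℝ≥0∞)) t * S2e μ n h x (y + t + ej j)) ^ 2 ∂μ)
    ^ (1/2 : ℝ)

/-- The strong mean `H^p_n f`. -/
def Hp (μ : Measure G) (p : ℝ) (n : ℕ) (f : G × G → ℝ) (x y : G) : ℝ :=
  ((1 / 2 ^ n) * ∑ m ∈ Finset.range (2 ^ n), |SMN μ m m f x y| ^ p) ^ (1 / p)

/-! Paley's formula `D_m = w_m ∑_j m_j r_j D_{2^j}` (with `m_j` the binary digits of `m` and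
`r_j(x) = (-1)^{x_j}` the Rademacher functions), together with `D_{2^j} = 2^j 𝟙_{I_j}`, evaluates the
kernel on the annulus `I_k \ I_{k+1}`, where `r_j = 1` for `j < k` and `r_k = -1`, as
`w_m(x) (∑_{j<k} m_j 2^j - m_k 2^k)`. On the other side `w_m(x + e_j) = (-1)^{m_j} w_m(x)`, so the
inner sum of the representation is `w_m(x)` times the same quantity plus `1/2`, the constant
coming from `∑_{j<k} 2^{j-1} = 2^{k-1} - 1/2`. On `I_n` both sides equal `m`, as `w_m = 1` there. -/

def rademacher (k : ℕ) (x : G) : ℝ := (-1) ^ (x k).val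

lemma rademacher_add (k : ℕ) (x y : G) :
    rademacher k (x + y) = rademacher k x * rademacher k y := by
  rw [rademacher, Pi.add_apply, ZMod.val_add, ← neg_one_pow_eq_pow_mod_two, pow_add]
  rfl

lemma rademacher_mul_self (k : ℕ) (x : G) : rademacher k x * rademacher k x = 1 := by
  rw [rademacher, ← pow_add, ← two_mul, pow_mul]
  norm_num

lemma rademacher_of_eq_zero {k : ℕ} {x : G} (h : x k = 0) : rademacher k x = 1 := by
  simp [rademacher, h]

lemma rademacher_of_ne_zero {k : ℕ} {x : G} (h : x k ≠ 0) : rademacher k x = -1 := by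
  have h1 : x k = 1 := by
    generalize x k = a at h
    fin_cases a
    · exact absurd rfl h
    · rfl
  simp [rademacher, h1, ZMod.val_one]

lemma rademacher_ej (k j : ℕ) : rademacher k (ej j) = if k = j then -1 else 1 := by
  by_cases h : k = j
  · rw [if_pos h, rademacher_of_ne_zero (by simp [ej, h])]
  · rw [if_neg h, rademacher_of_eq_zero (by simp [ej, h])]

lemma walsh_eq_prod_rademacher {m N : ℕ} (hm : m < 2 ^ N) (x : G) :
    walsh m x = ∏ k ∈ range N, if m.testBit k then rademacher k x else 1 := by
  have h_extend : ∀ a, m < 2 ^ a → a ≤ m + N →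
      ∏ k ∈ range a, (if m.testBit k then rademacher k x else 1) =
        ∏ k ∈ range (m + N), if m.testBit k then rademacher k x else 1 := by
    intro a ha haN
    refine prod_subset (range_subset_range.2 haN) fun k _ hk => ?_
    have hmk : m < 2 ^ k :=
      ha.trans_le (Nat.pow_le_pow_right two_pos (not_lt.1 (mem_range.not.1 hk)))
    rw [Nat.testBit_lt_two_pow hmk, if_neg Bool.false_ne_true]
  rw [h_extend N hm (Nat.le_add_left N m),
    ← h_extend m Nat.lt_two_pow_self (Nat.le_add_right m N), walsh, ← prod_pow_eq_pow_sum]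
  refine prod_congr rfl fun k _ => ?_
  split_ifs <;> rfl

lemma walsh_add (m : ℕ) (x y : G) : walsh m (x + y) = walsh m x * walsh m y := by
  simp only [walsh_eq_prod_rademacher (Nat.lt_two_pow_self (n := m)), ← prod_mul_distrib]
  refine prod_congr rfl fun k _ => ?_
  split_ifs
  · exact rademacher_add k x y
  · exact (one_mul 1).symm

lemma walsh_ej (m j : ℕ) : walsh m (ej j) = if m.testBit j then -1 else 1 := by
  have hm : m < 2 ^ (m + j + 1) :=
    Nat.lt_two_pow_self.trans_le (Nat.pow_le_pow_right two_pos (by omega))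
  rw [walsh_eq_prod_rademacher hm, prod_eq_single_of_mem j (mem_range.2 (by omega))]
  · simp [rademacher_ej]
  · intro k _ hkj
    simp [rademacher_ej, hkj]

lemma walsh_two_pow_add {t i : ℕ} (hi : i < 2 ^ t) (x : G) :
    walsh (2 ^ t + i) x = rademacher t x * walsh i x := by
  have hti : 2 ^ t + i < 2 ^ (t + 1) := by rw [pow_succ]; omega
  rw [walsh_eq_prod_rademacher hti, walsh_eq_prod_rademacher hi, prod_range_succ, mul_comm,
    Nat.testBit_two_pow_add_eq, Nat.testBit_lt_two_pow hi]
  congr 1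
  exact prod_congr rfl fun k hk => by rw [Nat.testBit_two_pow_add_gt (mem_range.1 hk)]

lemma walsh_eq_one_of_mem_In {k m : ℕ} {x : G} (hx : x ∈ In k) (hm : m < 2 ^ k) :
    walsh m x = 1 := by
  rw [walsh_eq_prod_rademacher hm]
  refine prod_eq_one fun j hj => ?_
  rw [rademacher_of_eq_zero (hx j (mem_range.1 hj)), ite_self]

lemma mem_In_succ {k : ℕ} {x : G} : x ∈ In (k + 1) ↔ x ∈ In k ∧ x k = 0 := by
  simp only [In, Set.mem_ofPred_eq, Nat.lt_succ_iff_lt_or_eq, or_imp, forall_and, forall_eq]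

lemma antitone_In : Antitone In :=
  fun _ _ hkl _ hx i hi => hx i (hi.trans_le hkl)

lemma exists_lt_mem_In_diff_succ {n : ℕ} {x : G} (hx : x ∉ In n) :
    ∃ k < n, x ∈ In k \ In (k + 1) := by
  induction n with
  | zero => exact absurd (fun i hi => absurd hi (Nat.not_lt_zero i)) hx
  | succ n ih =>
    by_cases hxn : x ∈ In n
    · exact ⟨n, n.lt_succ_self, hxn, hx⟩
    · obtain ⟨k, hkn, hk⟩ := ih hxn
      exact ⟨k, hkn.trans n.lt_succ_self, hk⟩

lemma eq_of_mem_In_diff_succ {j k : ℕ} {x : G} (hj : x ∈ In j \ In (j + 1))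
    (hk : x ∈ In k \ In (k + 1)) : j = k := by
  by_contra hne
  rcases Nat.lt_or_gt_of_ne hne with hlt | hlt
  · exact hj.2 (antitone_In hlt hk.1)
  · exact hk.2 (antitone_In hlt hj.1)

lemma Dker_two_pow_add {t i : ℕ} (hi : i ≤ 2 ^ t) (x : G) :
    Dker (2 ^ t + i) x = Dker (2 ^ t) x + rademacher t x * Dker i x := by
  rw [Dker, Dker, Dker, sum_range_add, mul_sum]
  exact congrArg _ (sum_congr rfl fun j hj => walsh_two_pow_add ((mem_range.1 hj).trans_le hi) x)

lemma Dker_of_mem_In {k m : ℕ} {x : G} (hx : x ∈ In k) (hm : m ≤ 2 ^ k) : Dker m x = m := by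
  rw [Dker, sum_congr rfl fun j hj => walsh_eq_one_of_mem_In hx ((mem_range.1 hj).trans_le hm)]
  simp

lemma Dker_two_pow (t : ℕ) (x : G) : Dker (2 ^ t) x = (In t).indicator (fun _ => 2 ^ t) x := by
  induction t with
  | zero => simp [Dker, walsh, In]
  | succ t ih =>
    rw [pow_succ, mul_two, Dker_two_pow_add le_rfl, ih]
    by_cases hxt : x ∈ In t
    · by_cases h0 : x t = 0
      · rw [rademacher_of_eq_zero h0, Set.indicator_of_mem hxt,
          Set.indicator_of_mem (mem_In_succ.2 ⟨hxt, h0⟩)]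
        ring
      · rw [rademacher_of_ne_zero h0, Set.indicator_of_mem hxt,
          Set.indicator_of_notMem fun h => h0 (mem_In_succ.1 h).2]
        ring
    · rw [Set.indicator_of_notMem hxt, Set.indicator_of_notMem fun h => hxt (mem_In_succ.1 h).1]
      ring

lemma walsh_mul_Dker_two_pow {i t : ℕ} (hi : i < 2 ^ t) (x : G) :
    walsh i x * Dker (2 ^ t) x = Dker (2 ^ t) x := by
  rw [Dker_two_pow]
  by_cases hx : x ∈ In t
  · rw [walsh_eq_one_of_mem_In hx hi, one_mul]
  · rw [Set.indicator_of_notMem hx, mul_zero]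

lemma Dker_eq_walsh_mul_sum {m N : ℕ} (hm : m < 2 ^ N) (x : G) :
    Dker m x = walsh m x *
      ∑ j ∈ range N, if m.testBit j then rademacher j x * Dker (2 ^ j) x else 0 := by
  induction N generalizing m with
  | zero => simp [Nat.lt_one_iff.1 hm, Dker]
  | succ N ih =>
    rw [sum_range_succ]
    by_cases hmN : m < 2 ^ N
    · rw [Nat.testBit_lt_two_pow hmN, if_neg Bool.false_ne_true, add_zero, ih hmN]
    obtain ⟨i, rfl⟩ := Nat.exists_eq_add_of_le (not_lt.1 hmN)
    have hi : i < 2 ^ N := by rw [pow_succ] at hm; omega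
    rw [sum_congr rfl fun j hj => by rw [Nat.testBit_two_pow_add_gt (mem_range.1 hj)],
      Nat.testBit_two_pow_add_eq, Nat.testBit_lt_two_pow hi, Bool.not_false, if_pos rfl,
      Dker_two_pow_add hi.le, walsh_two_pow_add hi, ih hi]
    linear_combination -(walsh i x * Dker (2 ^ N) x) * rademacher_mul_self N x
      - walsh_mul_Dker_two_pow hi x

lemma Dker_of_mem_In_diff_succ {k : ℕ} {x : G} (hx : x ∈ In k \ In (k + 1)) (m : ℕ) :
    Dker m x = walsh m x * ((∑ j ∈ range k, if m.testBit j then (2 : ℝ) ^ j else 0)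
      - if m.testBit k then 2 ^ k else 0) := by
  have hxk : x k ≠ 0 := fun h => hx.2 (mem_In_succ.2 ⟨hx.1, h⟩)
  have hm : m < 2 ^ (k + 1 + m) :=
    Nat.lt_two_pow_self.trans_le (Nat.pow_le_pow_right two_pos (Nat.le_add_left m _))
  have h_low : ∀ j ∈ range k, (if m.testBit j then rademacher j x * Dker (2 ^ j) x else 0) =
      if m.testBit j then 2 ^ j else 0 := fun j hj => by
    rw [rademacher_of_eq_zero (hx.1 j (mem_range.1 hj)), one_mul, Dker_two_pow,
      Set.indicator_of_mem (antitone_In (mem_range.1 hj).le hx.1)]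
  have h_high : ∀ j ∈ range m, (if m.testBit (k + 1 + j) then
      rademacher (k + 1 + j) x * Dker (2 ^ (k + 1 + j)) x else 0) = 0 := fun j _ => by
    rw [Dker_two_pow, Set.indicator_of_notMem fun h => hx.2 (antitone_In (Nat.le_add_right _ j) h),
      mul_zero, ite_self]
  rw [Dker_eq_walsh_mul_sum hm, sum_range_add, sum_range_succ, sum_congr rfl h_low,
    sum_eq_zero h_high, rademacher_of_ne_zero hxk, Dker_two_pow, Set.indicator_of_mem hx.1]
  split_ifs <;> ring

lemma sum_signed_mul_walsh_add_ej (m k : ℕ) (x : G) :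
    ∑ j ∈ range (k + 1), (if j = k then (1 : ℝ) else -1) * (2 ^ j / 2) * walsh m (x + ej j) =
      walsh m x * ((∑ j ∈ range k, if m.testBit j then (2 : ℝ) ^ j else 0)
        - (if m.testBit k then 2 ^ k else 0) + 1 / 2) := by
  have h_low : ∀ j ∈ range k,
      (if j = k then (1 : ℝ) else -1) * (2 ^ j / 2) * walsh m (x + ej j) = walsh m x *
        ((if m.testBit j then 2 ^ j else 0) - 2 ^ j / 2) := fun j hj => by
    rw [if_neg (mem_range.1 hj).ne, walsh_add, walsh_ej]
    split_ifs <;> ring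
  have h_geom : ∑ j ∈ range k, (2 : ℝ) ^ j / 2 = (2 ^ k - 1) / 2 := by
    rw [← sum_div, geom_sum_eq (by norm_num)]
    norm_num
  rw [sum_range_succ, sum_congr rfl h_low, ← mul_sum, sum_sub_distrib, h_geom, if_pos rfl,
    walsh_add, walsh_ej]
  split_ifs <;> ring

/-- Schipp's representation of the Dirichlet kernel. -/
theorem dirichlet_schipp_representation (n m : ℕ) (hm : m < 2 ^ n) (x : G) :
    Dker m x =
      (∑ k ∈ Finset.range n, Set.indicator (In k \ In (k+1)) (fun _ => (1 : ℝ)) x *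
        ∑ j ∈ Finset.range (k+1),
          (if j = k then (1 : ℝ) else -1) * (2 ^ j / 2) * walsh m (x + ej j))
      - walsh m x / 2
      + ((m : ℝ) + 1/2) * Set.indicator (In n) (fun _ => (1 : ℝ)) x := by
  by_cases hx : x ∈ In n
  · have h_annuli : ∀ k ∈ range n, x ∉ In k \ In (k + 1) :=
      fun k hk h => h.2 (antitone_In (mem_range.1 hk) hx)
    rw [Dker_of_mem_In hx hm.le, walsh_eq_one_of_mem_In hx hm, Set.indicator_of_mem hx,
      sum_eq_zero fun k hk => by rw [Set.indicator_of_notMem (h_annuli k hk), zero_mul]]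
    ring
  · obtain ⟨k, hkn, hxk⟩ := exists_lt_mem_In_diff_succ hx
    have h_other : ∀ j ∈ range n, j ≠ k → x ∉ In j \ In (j + 1) :=
      fun j _ hjk h => hjk (eq_of_mem_In_diff_succ h hxk)
    rw [sum_eq_single_of_mem k (mem_range.2 hkn)
        fun j hj hjk => by rw [Set.indicator_of_notMem (h_other j hj hjk), zero_mul],
      Set.indicator_of_mem hxk, Set.indicator_of_notMem hx, sum_signed_mul_walsh_add_ej,
      Dker_of_mem_In_diff_succ hxk]
    ring
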